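/- The class Wide_nar of inclusions widened at a narrow set of vertices is contained in the saturated closure of the class Wide_nar^(1) of inclusions widened at a single narrow vertex. -/

import Mathlib

open CategoryTheory Simplicial Opposite Limits

namespace Paper

/-! ## The simplicial set `J`, nerve of the free-living isomorphism -/

/-- The simplicial set `J`, the nerve of the free-living isomorphism `𝕀`:
its `n`-simplices are the tuples `{0,1}^(n+1)` (recorded as `Bool`-valued functions,
`false` being the vertex `0` and `true` the vertex `1`), with all simplicial
operators acting by reindexing. -/
def J : SSet.{0} where
  obj m := Fin (m.unop.len + 1) → Bool
  map f := TypeCat.ofHom fun a => a ∘ f.unop.toOrderHom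
  map_id _ := rfl
  map_comp _ _ := rfl

/-- The two vertices `0, 1 : Δ[0] ⟶ J` of `J`; `ptJ false` is the vertex `0` and
`ptJ true` is the vertex `1`. -/
def ptJ (b : Bool) : Δ[0] ⟶ J where
  app _ := TypeCat.ofHom fun _ _ => b
  naturality _ _ _ := rfl

/-- The boundary `∂J = {0} ∪ {1}` of `J` (two discrete points). -/
def bJ : SSet.{0} where
  obj _ := Bool
  map _ := TypeCat.ofHom fun b => b
  map_id _ := rfl
  map_comp _ _ := rfl

/-- The inclusion `∂J ↪ J`. -/
def bJIncl : bJ ⟶ J where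
  app _ := TypeCat.ofHom fun b _ => b
  naturality _ _ _ := rfl

/-! ## Binary products and pushout-products -/

/-- The (pointwise) product of two simplicial sets. -/
def sprod (X Y : SSet.{0}) : SSet.{0} where
  obj m := X.obj m × Y.obj m
  map f := TypeCat.ofHom fun p => (X.map f p.1, Y.map f p.2)
  map_id m := by
    ext p
    · exact FunctorToTypes.map_id_apply X p.1
    · exact FunctorToTypes.map_id_apply Y p.2
  map_comp f g := by
    ext p
    · exact FunctorToTypes.map_comp_apply X f g p.1
    · exact FunctorToTypes.map_comp_apply Y f g p.2

/-- The product of two morphisms of simplicial sets. -/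
def sprodMap {X X' Y Y' : SSet.{0}} (f : X ⟶ X') (g : Y ⟶ Y') : sprod X Y ⟶ sprod X' Y' where
  app m := TypeCat.ofHom fun p => (f.app m p.1, g.app m p.2)
  naturality m m' φ := by
    ext p
    refine @Prod.ext (X'.obj m') (Y'.obj m') _ _ ?_ ?_
    · exact ConcreteCategory.congr_hom (f.naturality φ) p.1
    · exact ConcreteCategory.congr_hom (g.naturality φ) p.2

/-- The pushout-product `f □ g : (A × Z) ∪ (B × W) ⟶ B × Z` of `f : A ⟶ B` and
`g : W ⟶ Z`, the domain being presented as the pushout `(A × Z) ∪_{A × W} (B × W)`. -/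
noncomputable def pp {A B W Z : SSet.{0}} (f : A ⟶ B) (g : W ⟶ Z) :
    pushout (sprodMap (𝟙 A) g) (sprodMap f (𝟙 W)) ⟶ sprod B Z :=
  pushout.desc (sprodMap f (𝟙 Z)) (sprodMap (𝟙 B) g) rfl

/-! ## Saturated classes of morphisms -/

/-- A class of morphisms is stable under retracts if, whenever `f` is a retract of `g`
in the arrow category, membership of `g` implies membership of `f`. -/
def StableUnderRetracts (T : MorphismProperty SSet.{0}) : Prop :=
  ∀ ⦃X Y X' Y' : SSet.{0}⦄ (f : X ⟶ Y) (g : X' ⟶ Y')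
    (i : Arrow.mk f ⟶ Arrow.mk g) (r : Arrow.mk g ⟶ Arrow.mk f),
    i ≫ r = 𝟙 _ → T g → T f

/-- The inclusion functor `Set.Iio i ⥤ ι`. -/
def iioFunctor {ι : Type} [Preorder ι] (i : ι) : Set.Iio i ⥤ ι :=
  Monotone.functor (f := Subtype.val) (fun _ _ h => h)

/-- The cocone on the restriction of `F : ι ⥤ SSet` to `Set.Iio i` with apex `F.obj i`. -/
def restrictionCocone {ι : Type} [Preorder ι] (F : ι ⥤ SSet.{0}) (i : ι) :
    Cocone (iioFunctor i ⋙ F) where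
  pt := F.obj i
  ι :=
    { app := fun j => F.map (homOfLE j.2.le)
      naturality := fun j k h => by
        dsimp [iioFunctor]
        rw [← F.map_comp, Category.comp_id]
        congr 1 }

/-- A class of morphisms is stable under transfinite composition if, for every
well-ordered type `ι` and every functor `F : ι ⥤ SSet` which is continuous at limit
stages and whose successor maps `F.obj i ⟶ F.obj (i+1)` all belong to the class, and
every colimit cocone `c` on `F`, the transfinite composite `F.obj ⊥ ⟶ c.pt` belongs to
the class. -/
def StableUnderTransfiniteComposition (T : MorphismProperty SSet.{0}) : Prop :=
  ∀ (ι : Type) [LinearOrder ι] [SuccOrder ι] [OrderBot ι] [WellFoundedLT ι]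
    (F : ι ⥤ SSet.{0}),
    (∀ i : ι, ¬IsMax i → T (F.map (homOfLE (Order.le_succ i)))) →
    (∀ i : ι, Order.IsSuccLimit i → Nonempty (IsColimit (restrictionCocone F i))) →
    ∀ (c : Cocone F), IsColimit c → T (c.ι.app ⊥)

/-- A class of morphisms of simplicial sets is saturated if it is closed under
isomorphisms, pushouts, transfinite compositions, and retracts. -/
structure IsSaturated (T : MorphismProperty SSet.{0}) : Prop where
  respectsIso : T.RespectsIso
  stableUnderCobaseChange : T.IsStableUnderCobaseChange
  stableUnderRetracts : StableUnderRetracts T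
  stableUnderTransfiniteComposition : StableUnderTransfiniteComposition T

/-- The saturated closure of a class of morphisms: the smallest saturated class
containing it. -/
def satClosure (S : MorphismProperty SSet.{0}) : MorphismProperty SSet.{0} :=
  fun _ _ f => ∀ T : MorphismProperty SSet.{0}, IsSaturated T → S ≤ T → T f

/-! ## Subcomplexes -/

/-- A subcomplex of a simplicial set. -/
structure Sub (X : SSet.{0}) where
  carrier : ∀ m, Set (X.obj m)
  map_mem : ∀ ⦃m m' : SimplexCategoryᵒᵖ⦄ (f : m ⟶ m') ⦃σ : X.obj m⦄,
    σ ∈ carrier m → X.map f σ ∈ carrier m'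

/-- The simplicial set underlying a subcomplex. -/
def Sub.toSSet {X : SSet.{0}} (S : Sub X) : SSet.{0} where
  obj m := S.carrier m
  map f := TypeCat.ofHom fun σ => ⟨X.map f σ.1, S.map_mem f σ.2⟩
  map_id m := by
    ext σ
    exact FunctorToTypes.map_id_apply X σ.1
  map_comp f g := by
    ext σ
    exact FunctorToTypes.map_comp_apply X f g σ.1

/-- The inclusion of a subcomplex. -/
def Sub.ι {X : SSet.{0}} (S : Sub X) : S.toSSet ⟶ X where
  app _ := TypeCat.ofHom fun σ => σ.1
  naturality _ _ _ := rfl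

/-- Containment of subcomplexes. -/
def Sub.Le {X : SSet.{0}} (S T : Sub X) : Prop := ∀ m, S.carrier m ⊆ T.carrier m

/-- The inclusion map associated to a containment of subcomplexes. -/
def Sub.homOfLe {X : SSet.{0}} {S T : Sub X} (h : S.Le T) : S.toSSet ⟶ T.toSSet where
  app m := TypeCat.ofHom fun σ => ⟨σ.1, h m σ.2⟩
  naturality _ _ _ := rfl

/-- The union of two subcomplexes. -/
def Sub.union {X : SSet.{0}} (S T : Sub X) : Sub X where
  carrier m := S.carrier m ∪ T.carrier m
  map_mem _ _ f _ h := h.imp (fun hs => S.map_mem f hs) (fun ht => T.map_mem f ht)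

/-- The intersection of two subcomplexes. -/
def Sub.inter {X : SSet.{0}} (S T : Sub X) : Sub X where
  carrier m := S.carrier m ∩ T.carrier m
  map_mem _ _ f _ h := ⟨S.map_mem f h.1, T.map_mem f h.2⟩

/-- A subcomplex `S` of `X`, viewed as a subcomplex of (the simplicial set underlying)
another subcomplex `T` of `X`. -/
def Sub.restrict {X : SSet.{0}} (T S : Sub X) : Sub T.toSSet where
  carrier m := {σ | σ.1 ∈ S.carrier m}
  map_mem _ _ f _ h := S.map_mem f h

/-- The (dimension zero) object of `SimplexCategoryᵒᵖ` indexing vertices. -/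
abbrev V0 : SimplexCategoryᵒᵖ := Opposite.op (SimplexCategory.mk 0)

/-- The full subcomplex of `X` on a set `ν` of vertices: the simplices all of whose
vertices lie in `ν`. -/
def fullSub (X : SSet.{0}) (ν : Set (X.obj V0)) : Sub X where
  carrier m := {σ | ∀ g : SimplexCategory.mk 0 ⟶ m.unop, X.map g.op σ ∈ ν}
  map_mem := by
    intro m m' f σ hσ g
    rw [← FunctorToTypes.map_comp_apply]
    exact hσ (g ≫ f.unop)

/-! ## Widenings and widened inclusions -/

/-- The widening `W_ν(X)` of `X` at a set `ν` of vertices: the full subcomplex of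
`J × X` on the vertex set `({0} × X₀) ∪ ({1} × ν)`. -/
def wideSub (X : SSet.{0}) (ν : Set (X.obj V0)) : Sub (sprod J X) :=
  fullSub (sprod J X) {p | p.1 0 = true → p.2 ∈ ν}

/-- The subcomplex `{0} × X` of `J × X` (the full subcomplex on the vertices
`{0} × X₀`). -/
def zeroSlice (X : SSet.{0}) : Sub (sprod J X) :=
  fullSub (sprod J X) {p | p.1 0 = false}

/-- For `A` a subcomplex of `Y`, the subcomplex `J × A` of `J × Y`. -/
def Sub.prodJ {Y : SSet.{0}} (A : Sub Y) : Sub (sprod J Y) where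
  carrier m := {p | p.2 ∈ A.carrier m}
  map_mem _ _ f _ h := A.map_mem f h

/-- Given a subcomplex (inclusion) `A = X ⊆ Y` and a set `ν` of vertices of `Y`, the
subcomplex `({0} × Y) ∪ W_{ν ∩ X₀}(X)` of `J × Y`: the domain of the inclusion
`X ↪ Y` widened at `ν`. -/
def widenedSub (Y : SSet.{0}) (A : Sub Y) (ν : Set (Y.obj V0)) : Sub (sprod J Y) :=
  (zeroSlice Y).union ((wideSub Y (ν ∩ A.carrier V0)).inter A.prodJ)

lemma zeroSlice_le_wideSub (Y : SSet.{0}) (ν : Set (Y.obj V0)) :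
    (zeroSlice Y).Le (wideSub Y ν) := by
  intro m σ hσ g h
  exact absurd (hσ g) (by simp [h])

lemma wideSub_mono (Y : SSet.{0}) {ν ν' : Set (Y.obj V0)} (h : ν ⊆ ν') :
    (wideSub Y ν).Le (wideSub Y ν') :=
  fun _ σ hσ g ht => h (hσ g ht)

lemma widenedSub_le (Y : SSet.{0}) (A : Sub Y) (ν : Set (Y.obj V0)) :
    (widenedSub Y A ν).Le (wideSub Y ν) := by
  refine fun m σ hσ => Or.elim hσ (fun h => ?_) (fun h => ?_)
  · exact zeroSlice_le_wideSub Y ν m h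
  · exact wideSub_mono Y Set.inter_subset_left m h.1

/-- The inclusion `X ↪ Y` widened at `ν`: the inclusion
`({0} × Y) ∪ W_{ν ∩ X₀}(X) ↪ W_ν(Y)`. -/
def widenedIncl (Y : SSet.{0}) (A : Sub Y) (ν : Set (Y.obj V0)) :
    (widenedSub Y A ν).toSSet ⟶ (wideSub Y ν).toSSet :=
  Sub.homOfLe (widenedSub_le Y A ν)

/-- `Wide`: the class of all widened inclusions. -/
def Wide : MorphismProperty SSet.{0} := fun _ _ h =>
  ∃ (Y : SSet.{0}) (A : Sub Y) (ν : Set (Y.obj V0)),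
    Arrow.mk h = Arrow.mk (widenedIncl Y A ν)

/-- `Wide^(1)`: the class of inclusions widened at a single vertex. -/
def Wide1 : MorphismProperty SSet.{0} := fun _ _ h =>
  ∃ (Y : SSet.{0}) (A : Sub Y) (v : Y.obj V0),
    Arrow.mk h = Arrow.mk (widenedIncl Y A {v})

/-! ## Narrow vertices -/

/-- A vertex `v` of `Y` is narrow if every simplex of `Y` has at most one vertex equal
to `v`. -/
def Narrow (Y : SSet.{0}) (v : Y.obj V0) : Prop :=
  ∀ ⦃m : SimplexCategoryᵒᵖ⦄ (σ : Y.obj m) (g g' : SimplexCategory.mk 0 ⟶ m.unop),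
    Y.map g.op σ = v → Y.map g'.op σ = v → g = g'

/-- `Wide_nar`: the class of inclusions widened at a narrow set of vertices. -/
def WideNar : MorphismProperty SSet.{0} := fun _ _ h =>
  ∃ (Y : SSet.{0}) (A : Sub Y) (ν : Set (Y.obj V0)),
    (∀ v ∈ ν, Narrow Y v) ∧ Arrow.mk h = Arrow.mk (widenedIncl Y A ν)

/-- `Wide_nar^(1)`: the class of inclusions widened at a single narrow vertex. -/
def WideNar1 : MorphismProperty SSet.{0} := fun _ _ h =>
  ∃ (Y : SSet.{0}) (A : Sub Y) (v : Y.obj V0),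
    Narrow Y v ∧ Arrow.mk h = Arrow.mk (widenedIncl Y A {v})

/-! ## Standard simplices, boundaries, skeleta, iso-horns -/

/-- The unique map to the terminal simplicial set `Δ[0]`. -/
def toPt (X : SSet.{0}) : X ⟶ Δ[0] where
  app m := TypeCat.ofHom fun _ => SSet.stdSimplex.const 0 0 m
  naturality m m' f := by
    ext x
    apply SSet.stdSimplex.objEquiv.injective
    apply SimplexCategory.Hom.ext
    apply OrderHom.ext
    funext j
    exact Subsingleton.elim (α := Fin 1) _ _

/-- The `i`-th vertex of the standard simplex `Δ[n]`. -/
def vrt (n : ℕ) (i : Fin (n + 1)) : Δ[n].obj V0 :=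
  SSet.stdSimplex.const n i V0

/-- The boundary `∂Δ[n]`, as a subcomplex of `Δ[n]`: the simplices which are not
surjective as monotone maps. -/
def bSub (n : ℕ) : Sub Δ[n] where
  carrier m := {σ | ¬Function.Surjective (SSet.stdSimplex.asOrderHom σ)}
  map_mem _ _ f σ hσ h := hσ (Function.Surjective.of_comp h)

/-- The `k`-skeleton of `Y`, as a subcomplex: the simplices which factor through some
simplex of dimension at most `k`. -/
def skSub (Y : SSet.{0}) (k : ℕ) : Sub Y where
  carrier m := {σ | ∃ (j : ℕ) (_ : j ≤ k) (f : m.unop ⟶ SimplexCategory.mk j)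
    (τ : Y.obj (Opposite.op (SimplexCategory.mk j))), Y.map f.op τ = σ}
  map_mem := by
    rintro m m' φ σ ⟨j, hj, f, τ, rfl⟩
    exact ⟨j, hj, φ.unop ≫ f, τ, by rw [← FunctorToTypes.map_comp_apply]; rfl⟩

/-- A `k`-simplex is nondegenerate if it admits no factorization through a simplex of
strictly smaller dimension. -/
def Nondegenerate (Y : SSet.{0}) {k : ℕ} (σ : Y.obj (Opposite.op (SimplexCategory.mk k))) :
    Prop :=
  ∀ (j : ℕ) (f : SimplexCategory.mk k ⟶ SimplexCategory.mk j)
    (τ : Y.obj (Opposite.op (SimplexCategory.mk j))), Y.map f.op τ = σ → k ≤ j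

/-- The iso-horn inclusion `𝕍_i[m+1] ↪ ∇̄_i[m+1]`: the boundary inclusion
`∂Δ[m] ↪ Δ[m]` widened at the single vertex `i`, i.e. the inclusion
`({0} × Δ[m]) ∪ W_i(∂Δ[m]) ↪ W_i(Δ[m])` of the iso-horn into the isoplex. -/
def isoHornIncl (m : ℕ) (i : Fin (m + 1)) :
    (widenedSub Δ[m] (bSub m) {vrt m i}).toSSet ⟶ (wideSub Δ[m] {vrt m i}).toSSet :=
  widenedIncl Δ[m] (bSub m) {vrt m i}

/-- `IsoHorn`: the class of all iso-horn inclusions. -/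
def IsoHorn : MorphismProperty SSet.{0} := fun _ _ h =>
  ∃ (m : ℕ) (i : Fin (m + 1)), Arrow.mk h = Arrow.mk (isoHornIncl m i)

/-! ## The classes `({0} ↪ J) □ Bdry` and `({0} ↪ J) □ Mono` -/

/-- The class `({0} ↪ J) □ Bdry` of pushout-products of the vertex `0 : Δ[0] ⟶ J`
with the boundary inclusions `∂Δ[n] ↪ Δ[n]`. -/
def ppJ0Bdry : MorphismProperty SSet.{0} := fun _ _ h =>
  ∃ n : ℕ, Arrow.mk h = Arrow.mk (pp (ptJ false) (SSet.boundary n).ι)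

/-- The class `({0} ↪ J) □ Mono` of pushout-products of the vertex `0 : Δ[0] ⟶ J`
with all monomorphisms of simplicial sets. -/
def ppJ0Mono : MorphismProperty SSet.{0} := fun _ _ h =>
  ∃ (W Z : SSet.{0}) (g : W ⟶ Z), Mono g ∧ Arrow.mk h = Arrow.mk (pp (ptJ false) g)

/-! Enumerate `ν` transfinitely and widen at one vertex at a time. The stages
`({0} × Y) ∪ W_{ν ∩ X₀}(X) ∪ W_μ(Y)`, for `μ` running through the initial segments of `ν`,
form a chain which is continuous because a simplex has only finitely many vertices.
Adding a vertex `v ∉ μ` is the cobase change of `(stage ∩ W_{μ ∪ {v}}(Y)) ↪ W_{μ ∪ {v}}(Y)`,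
and merging the two `J`-coordinates, `(a, (b, y)) ↦ (a ∨ b, y)`, identifies this inclusion with
the inclusion `W_μ(Y) ∩ W_{ν ∩ X₀}(X) ↪ W_μ(Y)` widened at its vertex `(0, v)`, which is
narrow when `v` is. -/

namespace Sub

variable {X : SSet.{0}}

@[ext]
lemma ext {S T : Sub X} (h : ∀ m σ, σ ∈ S.carrier m ↔ σ ∈ T.carrier m) : S = T := by
  obtain ⟨S, _⟩ := S
  obtain ⟨T, _⟩ := T
  congr
  funext m
  exact Set.ext (h m)

instance : PartialOrder (Sub X) where
  le := Sub.Le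
  le_refl _ _ _ := id
  le_trans _ _ _ h h' m _ hσ := h' m (h m hσ)
  le_antisymm _ _ h h' := Sub.ext fun m _ => ⟨fun hσ => h m hσ, fun hσ => h' m hσ⟩

instance : Lattice (Sub X) where
  sup := Sub.union
  le_sup_left _ _ _ _ := Or.inl
  le_sup_right _ _ _ _ := Or.inr
  sup_le _ _ _ h h' m _ hσ := hσ.elim (fun hσ => h m hσ) (fun hσ => h' m hσ)
  inf := Sub.inter
  inf_le_left _ _ _ _ := And.left
  inf_le_right _ _ _ _ := And.right
  le_inf _ _ _ h h' m _ hσ := ⟨h m hσ, h' m hσ⟩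

def toSSetFunctor : Sub X ⥤ SSet.{0} where
  obj S := S.toSSet
  map f := Sub.homOfLe (leOfHom f)

lemma homOfLe_mem_of_eq {P : MorphismProperty SSet.{0}} {S S' U U' : Sub X}
    (hS : S = S') (hU : U = U') (h : S ≤ U) (h' : S' ≤ U') (hP : P (homOfLe h)) :
    P (homOfLe h') := by
  subst hS hU
  exact hP

lemma isPushout_inf_sup (S T : Sub X) :
    IsPushout (homOfLe (inf_le_left : S ⊓ T ≤ S)) (homOfLe (inf_le_right : S ⊓ T ≤ T))
      (homOfLe (le_sup_left : S ≤ S ⊔ T)) (homOfLe (le_sup_right : T ≤ S ⊔ T)) where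
  w := rfl
  isColimit' := ⟨evaluationJointlyReflectsColimits _ fun m =>
    (PushoutCocone.isColimitMapCoconeEquiv _ _).2
      (Types.isPushout_of_bicartSq (S₁ := (S ⊓ T).carrier m) (S₂ := S.carrier m)
        (S₃ := T.carrier m) (S₄ := (S ⊔ T).carrier m) ⟨rfl, rfl⟩).isColimit⟩

def mapOfMapsTo {Y : SSet.{0}} (f : X ⟶ Y) (S : Sub X) (T : Sub Y)
    (hf : ∀ m, Set.MapsTo (f.app m) (S.carrier m) (T.carrier m)) : S.toSSet ⟶ T.toSSet where
  app m := TypeCat.ofHom fun σ => ⟨f.app m σ.1, hf m σ.2⟩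
  naturality m m' g := by
    ext σ
    exact Subtype.ext (by exact ConcreteCategory.congr_hom (f.naturality g) σ.1)

noncomputable def isoOfBijOn {Y : SSet.{0}} (f : X ⟶ Y) (S : Sub X) (T : Sub Y)
    (hf : ∀ m, Set.BijOn (f.app m) (S.carrier m) (T.carrier m)) : S.toSSet ≅ T.toSSet :=
  have : ∀ m, IsIso ((mapOfMapsTo f S T fun m => (hf m).mapsTo).app m) := fun m =>
    (isIso_iff_bijective _).2 (hf m).bijective
  have := NatIso.isIso_of_isIso_app (mapOfMapsTo f S T fun m => (hf m).mapsTo)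
  asIso (mapOfMapsTo f S T fun m => (hf m).mapsTo)

noncomputable def isColimitRestrictionCocone {ι : Type} [LinearOrder ι] (S : ι →o Sub X)
    {i : ι} (hi : ¬IsMin i) (hcover : ∀ m, (S i).carrier m ⊆ ⋃ j < i, (S j).carrier m) :
    IsColimit (restrictionCocone (S.monotone.functor ⋙ toSSetFunctor) i) :=
  have : Nonempty (Set.Iio i) := let ⟨j, hj⟩ := not_isMin_iff.1 hi; ⟨⟨j, hj⟩⟩
  evaluationJointlyReflectsColimits _ fun m => Types.FilteredColimit.isColimitOf' _ _
    (fun σ => by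
      obtain ⟨j, hj, hσ⟩ := Set.mem_iUnion₂.1 (hcover m σ.2)
      exact ⟨⟨j, hj⟩, ⟨σ.1, hσ⟩, rfl⟩)
    (fun j σ τ h => ⟨j, 𝟙 j, by
      have h' := congrArg Subtype.val h
      exact Subtype.ext h'⟩)

end Sub

namespace IsSaturated

variable {T : MorphismProperty SSet.{0}}

lemma id_mem (hT : IsSaturated T) (X : SSet.{0}) : T (𝟙 X) :=
  hT.stableUnderTransfiniteComposition (Fin 1) ((Functor.const (Fin 1)).obj X)
    (fun i hi => (hi (Subsingleton.isMax i)).elim)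
    (fun i hi => (hi.not_isMin (Subsingleton.isMin i)).elim) _
    (colimitOfDiagramTerminal isTerminalTop _)

lemma homOfLe_mem_of_chain (hT : IsSaturated T) {Z : SSet.{0}} {ι : Type} [LinearOrder ι]
    [SuccOrder ι] [OrderBot ι] [OrderTop ι] [WellFoundedLT ι] (S : ι →o Sub Z)
    (hsucc : ∀ i, ¬IsMax i → T (Sub.homOfLe (S.monotone (Order.le_succ i))))
    (hcover : ∀ i, Order.IsSuccLimit i → ∀ m, (S i).carrier m ⊆ ⋃ j < i, (S j).carrier m) :
    T (Sub.homOfLe (S.monotone (bot_le : ⊥ ≤ ⊤))) :=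
  hT.stableUnderTransfiniteComposition ι (S.monotone.functor ⋙ Sub.toSSetFunctor) hsucc
    (fun i hi => ⟨Sub.isColimitRestrictionCocone S hi.not_isMin (hcover i hi)⟩) _
    (colimitOfDiagramTerminal isTerminalTop _)

end IsSaturated

def vtx {m : SimplexCategoryᵒᵖ} (i : Fin (m.unop.len + 1)) : m ⟶ V0 :=
  (SimplexCategory.const (SimplexCategory.mk 0) m.unop i).op

section Membership

variable {Y : SSet.{0}} {m : SimplexCategoryᵒᵖ}

lemma mem_fullSub_iff {s : Set (Y.obj V0)} {σ : Y.obj m} :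
    σ ∈ (fullSub Y s).carrier m ↔ ∀ i, Y.map (vtx i) σ ∈ s := by
  refine ⟨fun h i => h _, fun h g => ?_⟩
  rw [SimplexCategory.eq_const_of_zero g]
  exact h _

lemma mem_wideSub_iff {s : Set (Y.obj V0)} {p : (sprod J Y).obj m} :
    p ∈ (wideSub Y s).carrier m ↔ ∀ i, p.1 i = true → Y.map (vtx i) p.2 ∈ s :=
  mem_fullSub_iff

lemma mem_zeroSlice_iff {p : (sprod J Y).obj m} :
    p ∈ (zeroSlice Y).carrier m ↔ ∀ i, p.1 i = false :=
  mem_fullSub_iff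

end Membership

section Merge

variable {Y : SSet.{0}} {A : Sub Y} {ν μ : Set (Y.obj V0)} {v : Y.obj V0}
  {m : SimplexCategoryᵒᵖ}

variable (Y μ v) in
def zeroVertex : (wideSub Y μ).toSSet.obj V0 :=
  ⟨(fun _ => false, v), mem_wideSub_iff.2 fun _ h => (Bool.false_ne_true h).elim⟩

lemma map_vtx_eq_zeroVertex_iff {σ : (wideSub Y μ).toSSet.obj m} {i : Fin (m.unop.len + 1)} :
    (wideSub Y μ).toSSet.map (vtx i) σ = zeroVertex Y μ v ↔
      σ.1.1 i = false ∧ Y.map (vtx i) σ.1.2 = v :=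
  ⟨fun h => ⟨congrArg (fun τ => τ.1.1 0) h, congrArg (fun τ => τ.1.2) h⟩,
    fun h => Subtype.ext (Prod.ext (funext fun _ => h.1) h.2)⟩

lemma Narrow.zeroVertex (hv : Narrow Y v) : Narrow (wideSub Y μ).toSSet (zeroVertex Y μ v) :=
  fun _ σ g g' h h' => hv σ.1.2 g g' (congrArg (fun τ => τ.1.2) h) (congrArg (fun τ => τ.1.2) h')

variable (Y μ) in
def mergeJ : sprod J (wideSub Y μ).toSSet ⟶ sprod J Y where
  app _ := TypeCat.ofHom fun x => (fun i => x.1 i || x.2.1.1 i, x.2.1.2)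
  naturality _ _ _ := rfl

lemma mergeJ_app (x : (sprod J (wideSub Y μ).toSSet).obj m) :
    (mergeJ Y μ).app m x = (fun i => x.1 i || x.2.1.1 i, x.2.1.2) := rfl

lemma mem_wideSub_zeroVertex_iff {x : (sprod J (wideSub Y μ).toSSet).obj m} :
    x ∈ (wideSub (wideSub Y μ).toSSet {zeroVertex Y μ v}).carrier m ↔
      ∀ i, x.1 i = true → x.2.1.1 i = false ∧ Y.map (vtx i) x.2.1.2 = v := by
  simp only [mem_wideSub_iff, Set.mem_singleton_iff, map_vtx_eq_zeroVertex_iff]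

/-- `mergeJ` is inverted by sending a vertex labelled `v` to the first `J`-coordinate and every
other vertex to the second. -/
lemma fst_snd_eq_mergeJ_of_mem [DecidableEq (Y.obj V0)] (hvμ : v ∉ μ)
    {x : (sprod J (wideSub Y μ).toSSet).obj m}
    (hx : x ∈ (wideSub (wideSub Y μ).toSSet {zeroVertex Y μ v}).carrier m) (i) :
    x.1 i = (((mergeJ Y μ).app m x).1 i && decide (Y.map (vtx i) x.2.1.2 = v)) ∧
      x.2.1.1 i = (((mergeJ Y μ).app m x).1 i && !decide (Y.map (vtx i) x.2.1.2 = v)) := by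
  have ha := mem_wideSub_zeroVertex_iff.1 hx i
  have hb := mem_wideSub_iff.1 x.2.2 i
  change _ = ((x.1 i || x.2.1.1 i) && _) ∧ _ = ((x.1 i || x.2.1.1 i) && _)
  by_cases hy : Y.map (vtx i) x.2.1.2 = v
  · cases h : x.2.1.1 i
    · simp [hy]
    · exact (hvμ (hy ▸ hb h)).elim
  · cases h : x.1 i
    · simp [hy]
    · exact (hy (ha h).2).elim

lemma bijOn_mergeJ (hvμ : v ∉ μ) (m : SimplexCategoryᵒᵖ) :
    Set.BijOn ((mergeJ Y μ).app m) ((wideSub (wideSub Y μ).toSSet {zeroVertex Y μ v}).carrier m)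
      ((wideSub Y (insert v μ)).carrier m) := by
  classical
  refine ⟨fun x hx => mem_wideSub_iff.2 fun i hi => ?_, fun x hx x' hx' h => ?_, fun p hp => ?_⟩
  · rcases Bool.or_eq_true_iff.1 hi with ha | hb
    · exact (mem_wideSub_zeroVertex_iff.1 hx i ha).2 ▸ Set.mem_insert _ _
    · exact Set.mem_insert_of_mem _ (mem_wideSub_iff.1 x.2.2 i hb)
  · have hy : x.2.1.2 = x'.2.1.2 := congrArg (·.2) h
    have hc : ∀ i, ((mergeJ Y μ).app m x).1 i = ((mergeJ Y μ).app m x').1 i :=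
      congrFun (congrArg (·.1) h)
    refine Prod.ext (funext fun i => ?_) (Subtype.ext (Prod.ext (funext fun i => ?_) hy))
    · rw [(fst_snd_eq_mergeJ_of_mem hvμ hx i).1, (fst_snd_eq_mergeJ_of_mem hvμ hx' i).1, hy, hc]
    · rw [(fst_snd_eq_mergeJ_of_mem hvμ hx i).2, (fst_snd_eq_mergeJ_of_mem hvμ hx' i).2, hy, hc]
  · have hb : (fun i => p.1 i && !decide (Y.map (vtx i) p.2 = v), p.2) ∈
        (wideSub Y μ).carrier m := mem_wideSub_iff.2 fun i hi => by
      simp only [Bool.and_eq_true, Bool.not_eq_true', decide_eq_false_iff_not] at hi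
      exact (Set.mem_insert_iff.1 (mem_wideSub_iff.1 hp i hi.1)).resolve_left hi.2
    refine ⟨(fun i => p.1 i && decide (Y.map (vtx i) p.2 = v), ⟨_, hb⟩),
      mem_wideSub_zeroVertex_iff.2 fun i hi => ?_, Prod.ext (funext fun i => ?_) rfl⟩
    · simp only [Bool.and_eq_true, decide_eq_true_eq] at hi
      simp [hi.2]
    · change (p.1 i && _ || p.1 i && _) = p.1 i
      cases p.1 i <;> simp

lemma mem_widenedSub_iff_mergeJ_mem (hvν : v ∈ ν) (hvμ : v ∉ μ)
    {x : (sprod J (wideSub Y μ).toSSet).obj m}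
    (hx : x ∈ (wideSub (wideSub Y μ).toSSet {zeroVertex Y μ v}).carrier m) :
    x ∈ (widenedSub (wideSub Y μ).toSSet
        ((wideSub Y μ).restrict (wideSub Y (ν ∩ A.carrier V0) ⊓ A.prodJ))
        {zeroVertex Y μ v}).carrier m ↔
      (mergeJ Y μ).app m x ∈ (widenedSub Y A ν ⊔ wideSub Y μ).carrier m := by
  have ha := mem_wideSub_zeroVertex_iff.1 hx
  have hb := mem_wideSub_iff.1 x.2.2
  constructor
  · rintro (h0 | ⟨hw, hwν, hA⟩)
    · refine Or.inr (mem_wideSub_iff.2 fun i hi => hb i ?_)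
      simpa [mergeJ_app, mem_zeroSlice_iff.1 h0 i] using hi
    · refine Or.inl (Or.inr ⟨mem_wideSub_iff.2 fun i hi => ?_, hA⟩)
      rcases Bool.or_eq_true_iff.1 hi with hai | hbi
      · have hvA : Y.map (vtx i) x.2.1.2 ∈ A.carrier V0 := (mem_wideSub_iff.1 hw i hai).2.2
        change Y.map (vtx i) x.2.1.2 ∈ ν ∩ A.carrier V0
        rw [(ha i hai).2] at hvA ⊢
        exact ⟨hvν, hvA⟩
      · exact mem_wideSub_iff.1 hwν i hbi
  · rintro ((h0 | ⟨hw, hA⟩) | hμ)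
    · exact Or.inl (mem_zeroSlice_iff.2 fun i =>
        (Bool.or_eq_false_iff.1 (mem_zeroSlice_iff.1 h0 i)).1)
    · refine Or.inr ⟨mem_wideSub_iff.2 fun i hai => ⟨map_vtx_eq_zeroVertex_iff.2 (ha i hai),
        mem_wideSub_iff.2 fun _ hbi => ?_, (mem_wideSub_iff.1 hw i (by simp [mergeJ_app, hai])).2⟩,
        mem_wideSub_iff.2 fun i hbi => mem_wideSub_iff.1 hw i (by simp [mergeJ_app, hbi]), hA⟩
      exact absurd ((ha i hai).1.symm.trans hbi) Bool.false_ne_true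
    · refine Or.inl (mem_zeroSlice_iff.2 fun i => ?_)
      by_contra hai
      rw [Bool.not_eq_false] at hai
      exact hvμ ((ha i hai).2 ▸ mem_wideSub_iff.1 hμ i (by simp [mergeJ_app, hai]))

lemma bijOn_mergeJ_widenedSub (hvν : v ∈ ν) (hvμ : v ∉ μ) (m : SimplexCategoryᵒᵖ) :
    Set.BijOn ((mergeJ Y μ).app m) ((widenedSub (wideSub Y μ).toSSet
        ((wideSub Y μ).restrict (wideSub Y (ν ∩ A.carrier V0) ⊓ A.prodJ))
        {zeroVertex Y μ v}).carrier m)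
      (((widenedSub Y A ν ⊔ wideSub Y μ) ⊓ wideSub Y (insert v μ)).carrier m) := by
  have hle := widenedSub_le (wideSub Y μ).toSSet
    ((wideSub Y μ).restrict (wideSub Y (ν ∩ A.carrier V0) ⊓ A.prodJ)) {zeroVertex Y μ v} m
  have h := Set.MapsTo.inter_bijOn
    (fun x hx => (mem_widenedSub_iff_mergeJ_mem hvν hvμ (hle hx)).1 hx) (bijOn_mergeJ hvμ m)
    (fun x ⟨hx, hX⟩ => (mem_widenedSub_iff_mergeJ_mem hvν hvμ hx).2 hX)
  rwa [Set.inter_eq_left.2 hle] at h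

lemma IsSaturated.homOfLe_mem_of_insert {T : MorphismProperty SSet.{0}} (hT : IsSaturated T)
    (hW1 : WideNar1 ≤ T) (hv : Narrow Y v) (hvν : v ∈ ν) (hvμ : v ∉ μ)
    (h : widenedSub Y A ν ⊔ wideSub Y μ ≤ widenedSub Y A ν ⊔ wideSub Y (insert v μ)) :
    T (Sub.homOfLe h) := by
  have := hT.respectsIso
  set X := widenedSub Y A ν ⊔ wideSub Y μ
  set C := wideSub Y (insert v μ)
  have e : Arrow.mk (widenedIncl (wideSub Y μ).toSSet
      ((wideSub Y μ).restrict (wideSub Y (ν ∩ A.carrier V0) ⊓ A.prodJ)) {zeroVertex Y μ v}) ≅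
      Arrow.mk (Sub.homOfLe (inf_le_right : X ⊓ C ≤ C)) :=
    Arrow.isoMk (Sub.isoOfBijOn _ _ _ (bijOn_mergeJ_widenedSub hvν hvμ))
      (Sub.isoOfBijOn _ _ _ (bijOn_mergeJ hvμ)) rfl
  have hattach : T (Sub.homOfLe (inf_le_right : X ⊓ C ≤ C)) :=
    (T.arrow_mk_iso_iff e).1 (hW1 _ ⟨_, _, _, hv.zeroVertex, rfl⟩)
  have hpushout : T (Sub.homOfLe (le_sup_left : X ≤ X ⊔ C)) :=
    hT.stableUnderCobaseChange.of_isPushout (Sub.isPushout_inf_sup X C) hattach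
  refine Sub.homOfLe_mem_of_eq rfl ?_ _ h hpushout
  have hC : wideSub Y μ ⊔ C = C := sup_eq_right.2 (wideSub_mono Y (Set.subset_insert v μ))
  rw [sup_assoc, hC]

end Merge

section Rank

variable {Y : SSet.{0}} {A : Sub Y} {ν : Set (Y.obj V0)} {ι : Type} [LinearOrder ι]
  {T : MorphismProperty SSet.{0}}

variable (Y A ν) in
def widenedChain (r : Y.obj V0 → ι) : ι →o Sub (sprod J Y) where
  toFun i := widenedSub Y A ν ⊔ wideSub Y {w | r w < i}
  monotone' _ _ h := sup_le_sup_left (wideSub_mono Y fun _ hw => lt_of_lt_of_le hw h) _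

lemma widenedChain_apply (r : Y.obj V0 → ι) (i : ι) :
    widenedChain Y A ν r i = widenedSub Y A ν ⊔ wideSub Y {w | r w < i} := rfl

lemma widenedChain_bot [OrderBot ι] (r : Y.obj V0 → ι) :
    widenedChain Y A ν r ⊥ = widenedSub Y A ν := by
  refine sup_eq_left.2 fun m σ hσ => Or.inl (mem_zeroSlice_iff.2 fun i => ?_)
  by_contra h
  exact not_lt_bot (mem_wideSub_iff.1 hσ i (Bool.not_eq_false _ ▸ h))

lemma widenedChain_top [OrderTop ι] {r : Y.obj V0 → ι} (hr : ∀ w, r w < ⊤ ↔ w ∈ ν) :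
    widenedChain Y A ν r ⊤ = wideSub Y ν := by
  have hν : {w | r w < ⊤} = ν := Set.ext hr
  rw [widenedChain_apply, hν]
  exact sup_eq_right.2 (widenedSub_le Y A ν)

lemma widenedChain_cover [SuccOrder ι] {r : Y.obj V0 → ι} {i : ι} (hi : Order.IsSuccLimit i)
    (m : SimplexCategoryᵒᵖ) :
    (widenedChain Y A ν r i).carrier m ⊆ ⋃ j < i, (widenedChain Y A ν r j).carrier m := by
  obtain ⟨j₀, hj₀⟩ := not_isMin_iff.1 hi.not_isMin
  have : Nonempty (Set.Iio i) := ⟨⟨j₀, hj₀⟩⟩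
  rintro σ (hσ | hσ)
  · exact Set.mem_iUnion₂.2 ⟨j₀, hj₀, Or.inl hσ⟩
  · have hlt := mem_wideSub_iff.1 hσ
    obtain ⟨⟨j, hj⟩, hle⟩ := Finite.exists_le (α := Set.Iio i) (ι := {p // σ.1 p = true})
      fun p => ⟨Order.succ (r (Y.map (vtx p.1) σ.2)), hi.succ_lt (hlt p.1 p.2)⟩
    refine Set.mem_iUnion₂.2 ⟨j, hj, Or.inr (mem_wideSub_iff.2 fun p hp => ?_)⟩
    exact (Order.lt_succ_of_not_isMax (hlt p hp).not_isMax).trans_le (hle ⟨p, hp⟩)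

lemma IsSaturated.widenedChain_succ_mem [SuccOrder ι] [OrderTop ι] (hT : IsSaturated T)
    (hW1 : WideNar1 ≤ T) (hν : ∀ v ∈ ν, Narrow Y v) {r : Y.obj V0 → ι}
    (hr : ∀ w, r w < ⊤ ↔ w ∈ ν) (hinj : Set.InjOn r ν) {i : ι} (hi : ¬IsMax i) :
    T (Sub.homOfLe ((widenedChain Y A ν r).monotone (Order.le_succ i))) := by
  have hsucc : {w | r w < Order.succ i} = {w | r w ≤ i} :=
    Set.ext fun _ => Order.lt_succ_iff_of_not_isMax hi
  have hν_of_le : ∀ w, r w ≤ i → w ∈ ν := fun w hw =>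
    (hr w).1 (hw.trans_lt (lt_top_iff_ne_top.2 fun h => hi (h ▸ isMax_top)))
  by_cases hv : ∃ v, r v = i
  · obtain ⟨v, rfl⟩ := hv
    have hvν := hν_of_le v le_rfl
    have hinsert : {w | r w ≤ r v} = insert v {w | r w < r v} := by
      ext w
      rw [Set.mem_ofPred_eq, le_iff_lt_or_eq, Set.mem_insert_iff, or_comm]
      exact or_congr_left ⟨fun h => hinj (hν_of_le w h.le) hvν h, fun h => h ▸ rfl⟩
    refine Sub.homOfLe_mem_of_eq rfl ?_ _ _ (hT.homOfLe_mem_of_insert hW1 (hν v hvν) hvν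
      (lt_irrefl (r v)) (sup_le_sup_left (wideSub_mono Y (Set.subset_insert _ _)) _))
    rw [widenedChain_apply, hsucc, hinsert]
  · simp only [not_exists] at hv
    have hstable : {w | r w ≤ i} = {w | r w < i} :=
      Set.ext fun w => le_iff_lt_or_eq.trans (or_iff_left (hv w))
    refine Sub.homOfLe_mem_of_eq rfl ?_ le_rfl _ (hT.id_mem _)
    rw [widenedChain_apply, widenedChain_apply, hsucc, hstable]

lemma IsSaturated.widenedIncl_mem_of_rank [SuccOrder ι] [OrderBot ι] [OrderTop ι]
    [WellFoundedLT ι] (hT : IsSaturated T) (hW1 : WideNar1 ≤ T) (hν : ∀ v ∈ ν, Narrow Y v)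
    (r : Y.obj V0 → ι) (hr : ∀ w, r w < ⊤ ↔ w ∈ ν) (hinj : Set.InjOn r ν) :
    T (widenedIncl Y A ν) :=
  Sub.homOfLe_mem_of_eq (widenedChain_bot r) (widenedChain_top hr) _ _
    (hT.homOfLe_mem_of_chain _ (fun _ hi => hT.widenedChain_succ_mem hW1 hν hr hinj hi)
      (fun _ hi => widenedChain_cover hi))

lemma IsSaturated.widenedIncl_mem (hT : IsSaturated T) (hW1 : WideNar1 ≤ T)
    (hν : ∀ v ∈ ν, Narrow Y v) : T (widenedIncl Y A ν) := by
  classical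
  obtain ⟨_, _⟩ := exists_wellFoundedLT (Y.obj V0)
  let : SuccOrder (WithTop (WithBot (Y.obj V0))) := SuccOrder.ofLinearWellFoundedLT _
  refine hT.widenedIncl_mem_of_rank hW1 hν
    (fun w => if w ∈ ν then ((w : WithBot (Y.obj V0)) : WithTop (WithBot (Y.obj V0))) else ⊤)
    (fun w => ?_) (fun w hw w' hw' h => ?_)
  · by_cases hw : w ∈ ν <;> simp [hw]
  · simpa [hw, hw'] using h

end Rank

/-- The class `Wide_nar` of inclusions widened at a narrow set of
vertices is contained in the saturated closure of the class `Wide_nar^(1)` of inclusions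
widened at a single narrow vertex. -/
theorem WideNar_le_satClosure_WideNar1 : WideNar ≤ satClosure WideNar1 := by
  rintro _ _ f ⟨Y, A, ν, hν, hf⟩ T hT hW1
  have := hT.respectsIso
  exact (T.arrow_mk_iso_iff (eqToIso hf)).2 (hT.widenedIncl_mem hW1 hν)

end Paper
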